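/- Let 0 < q < 1 and θ > 0. Then sup over t ≥ 1 of Σ_{k=1}^{t−1} q^k · t^{2θ}/(t−k)^{2θ} is finite. -/

import Mathlib

/-! Since `t ≤ (k + 1)(t - k)` whenever `k < t`, the `k`-th term is at most `q ^ k (k + 1) ^ (2θ)`,
and these majorants form a convergent series because geometric decay beats polynomial growth. -/

open Finset

lemma summable_add_one_pow_mul_geometric (n : ℕ) {r : ℝ} (hr0 : 0 < r) (hr1 : r < 1) :
    Summable fun k : ℕ => ((k : ℝ) + 1) ^ n * r ^ k := by
  have hshift := (summable_nat_add_iff 1).mpr <|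
    summable_pow_mul_geometric_of_norm_lt_one (R := ℝ) n (by rwa [Real.norm_of_nonneg hr0.le])
  refine (summable_mul_left_iff (a := r) hr0.ne').mp (hshift.congr fun k => ?_)
  push_cast
  ring

lemma summable_add_one_rpow_mul_geometric (p : ℝ) {r : ℝ} (hr0 : 0 < r) (hr1 : r < 1) :
    Summable fun k : ℕ => ((k : ℝ) + 1) ^ p * r ^ k := by
  obtain ⟨n, hn⟩ := exists_nat_ge p
  refine (summable_add_one_pow_mul_geometric n hr0 hr1).of_nonneg_of_le
    (fun k => by positivity) fun k => ?_
  have hbase : (1 : ℝ) ≤ k + 1 := by simp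
  calc ((k : ℝ) + 1) ^ p * r ^ k ≤ ((k : ℝ) + 1) ^ (n : ℝ) * r ^ k := by
        gcongr
    _ = ((k : ℝ) + 1) ^ n * r ^ k := by rw [Real.rpow_natCast]

lemma natCast_div_natCast_sub_le {t k : ℕ} (hk : k < t) :
    (t : ℝ) / ((t - k : ℕ) : ℝ) ≤ k + 1 := by
  have hpos : (0 : ℝ) < ((t - k : ℕ) : ℝ) := by exact_mod_cast Nat.sub_pos_of_lt hk
  rw [div_le_iff₀ hpos]
  have : t ≤ (k + 1) * (t - k) := by
    obtain ⟨m, rfl⟩ := Nat.exists_eq_add_of_lt hk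
    rw [show k + m + 1 - k = m + 1 by omega]
    nlinarith
  exact_mod_cast this

lemma natCast_rpow_div_natCast_sub_rpow_le {t k : ℕ} (hk : k < t) {p : ℝ} (hp : 0 ≤ p) :
    (t : ℝ) ^ p / ((t - k : ℕ) : ℝ) ^ p ≤ ((k : ℝ) + 1) ^ p := by
  rw [← Real.div_rpow (by positivity) (by positivity)]
  exact Real.rpow_le_rpow (by positivity) (natCast_div_natCast_sub_le hk) hp

/-- For `0 < q < 1` and `θ > 0`, the quantity
`Σ_{k=1}^{t−1} q^k · t^{2θ}/(t−k)^{2θ}` is uniformly bounded over `t ≥ 1`. -/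
theorem stmt_10 (q θ : ℝ) (hq0 : 0 < q) (hq1 : q < 1) (hθ : 0 < θ) :
    ∃ D : ℝ, ∀ t : ℕ, 1 ≤ t →
      ∑ k ∈ Finset.Icc 1 (t - 1), q ^ k * (t : ℝ) ^ (2 * θ) / ((t - k : ℕ) : ℝ) ^ (2 * θ)
        ≤ D := by
  refine ⟨∑' k : ℕ, ((k : ℝ) + 1) ^ (2 * θ) * q ^ k, fun t _ => ?_⟩
  calc ∑ k ∈ Icc 1 (t - 1), q ^ k * (t : ℝ) ^ (2 * θ) / ((t - k : ℕ) : ℝ) ^ (2 * θ)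
      ≤ ∑ k ∈ Icc 1 (t - 1), ((k : ℝ) + 1) ^ (2 * θ) * q ^ k := by
        refine sum_le_sum fun k hk => ?_
        have hkt : k < t := by rw [mem_Icc] at hk; omega
        rw [mul_div_assoc, mul_comm]
        gcongr
        exact natCast_rpow_div_natCast_sub_rpow_le hkt (by positivity)
    _ ≤ ∑' k : ℕ, ((k : ℝ) + 1) ^ (2 * θ) * q ^ k :=
        (summable_add_one_rpow_mul_geometric _ hq0 hq1).sum_le_tsum _ fun k _ => by positivity
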